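/- Let G be a finite non-abelian group with center Z of size z, and let c⋆ = max{|C_x| : x ∉ Z}. Define P(x,y) = |C_x|⁻¹·1[xy=yx] (with C_e = G for central elements). Then for all x, y ∈ G, the two-step transition probability satisfies P²(x,y) = Σ_{g∈G} P(x,g)P(g,y) ≥ z/(|G|·c⋆). -/
import Mathlib

lemma cent_of_center' {G : Type*} [Group G] (u : G) (h : u ∈ Subgroup.center G) :
    Subgroup.centralizer ({u} : Set G) = ⊤ := by
  rw [Subgroup.eq_top_iff']
  intro g
  rw [Subgroup.mem_centralizer_singleton_iff]
  exact Subgroup.mem_center_iff.mp h g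

lemma cent_mul_center' {G : Type*} [Group G] (t c : G) (hc : c ∈ Subgroup.center G) :
    Subgroup.centralizer ({t * c} : Set G) = Subgroup.centralizer ({t} : Set G) := by
  ext g
  simp only [Subgroup.mem_centralizer_singleton_iff]
  have hcg := Subgroup.mem_center_iff.mp hc g
  constructor
  · intro h
    have : g * t * c = t * g * c := by
      calc g * t * c = g * (t * c) := by group
        _ = (t * c) * g := h
        _ = t * (c * g) := by group
        _ = t * (g * c) := by rw [hcg]
        _ = t * g * c := by group
    exact mul_right_cancel this
  · intro h
    calc g * (t * c) = (g * t) * c := by group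
      _ = (t * g) * c := by rw [h]
      _ = t * (g * c) := by group
      _ = t * (c * g) := by rw [hcg]
      _ = (t * c) * g := by group

/-- Two-step minorization for the commuting chain: if `G` is a finite non-abelian group with
center of size `z` and `c⋆` is the maximal size of the centralizer of a non-central element,
then `P²(x,y) = ∑_g P(x,g) P(g,y) ≥ z/(|G| c⋆)` for all `x, y`. -/
theorem commP_two_step_minorization {G : Type*} [Group G] [Fintype G] [DecidableEq G]
    (hG : ¬ ∀ a b : G, a * b = b * a)
    (P : G → G → ℝ)
    (hP : ∀ x y : G, P x y =
      if x * y = y * x then ((Nat.card (Subgroup.centralizer ({x} : Set G)) : ℝ))⁻¹ else 0)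
    (z cstar : ℕ) (hz : z = Nat.card (Subgroup.center G))
    (hc : IsGreatest {n : ℕ | ∃ x : G, x ∉ Subgroup.center G ∧
      n = Nat.card (Subgroup.centralizer ({x} : Set G))} cstar) :
    ∀ x y : G, (z : ℝ) / ((Nat.card G : ℝ) * (cstar : ℝ)) ≤ ∑ g : G, P x g * P g y := by
  intro x y
  obtain ⟨x₀, hx₀, hx₀c⟩ := hc.1
  have key : ∃ t : G, ∀ c : G, c ∈ Subgroup.center G →
      (x * (t * c) = (t * c) * x) ∧ ((t * c) * y = y * (t * c)) ∧
      Nat.card (Subgroup.centralizer ({x} : Set G)) *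
        Nat.card (Subgroup.centralizer ({t * c} : Set G)) ≤ Nat.card G * cstar := by
    by_cases hx : x ∈ Subgroup.center G
    · by_cases hy : y ∈ Subgroup.center G
      · refine ⟨x₀, fun c hcc => ⟨(Subgroup.mem_center_iff.mp hx _).symm,
          Subgroup.mem_center_iff.mp hy _, ?_⟩⟩
        rw [cent_mul_center' _ _ hcc, cent_of_center' _ hx, Subgroup.card_top, ← hx₀c]
      · refine ⟨y, fun c hcc => ⟨(Subgroup.mem_center_iff.mp hx _).symm, ?_, ?_⟩⟩
        · have hcy := Subgroup.mem_center_iff.mp hcc y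
          rw [mul_assoc, ← hcy]
        · rw [cent_mul_center' _ _ hcc, cent_of_center' _ hx, Subgroup.card_top]
          exact Nat.mul_le_mul_left _ (hc.2 ⟨y, hy, rfl⟩)
    · refine ⟨1, fun c hcc => ?_⟩
      have hcx := Subgroup.mem_center_iff.mp hcc x
      have hcy := Subgroup.mem_center_iff.mp hcc y
      refine ⟨by rw [one_mul]; exact hcx, by rw [one_mul]; exact hcy.symm, ?_⟩
      rw [one_mul, cent_of_center' _ hcc, Subgroup.card_top, Nat.mul_comm]
      exact Nat.mul_le_mul_left _ (hc.2 ⟨x, hx, rfl⟩)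
  obtain ⟨t, ht⟩ := key
  have hGpos : 0 < (Nat.card G : ℝ) := by exact_mod_cast Nat.card_pos
  have hcstarpos : 0 < (cstar : ℝ) := by
    have : 0 < Nat.card (Subgroup.centralizer ({x₀} : Set G)) := Nat.card_pos
    rw [hx₀c]
    exact_mod_cast this
  set S : Finset G := Finset.univ.image (fun c : Subgroup.center G => t * (c : G)) with hS
  have hinj : Function.Injective (fun c : Subgroup.center G => t * (c : G)) :=
    fun a b h => Subtype.ext (mul_left_cancel h)
  have hcardS : S.card = z := by
    rw [hS, Finset.card_image_of_injective _ hinj, Finset.card_univ, hz,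
      Nat.card_eq_fintype_card]
  have hbound : ∀ g ∈ S, ((Nat.card G : ℝ) * (cstar : ℝ))⁻¹ ≤ P x g * P g y := by
    intro g hg
    rw [hS, Finset.mem_image] at hg
    obtain ⟨c, _, rfl⟩ := hg
    obtain ⟨h1, h2, h3⟩ := ht c c.2
    rw [hP, hP, if_pos h1, if_pos h2, ← mul_inv]
    have hA : 0 < (Nat.card (Subgroup.centralizer ({x} : Set G)) : ℝ) := by
      exact_mod_cast (Nat.card_pos :
        0 < Nat.card (Subgroup.centralizer ({x} : Set G)))
    have hB : 0 < (Nat.card (Subgroup.centralizer ({t * (c : G)} : Set G)) : ℝ) := by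
      exact_mod_cast (Nat.card_pos :
        0 < Nat.card (Subgroup.centralizer ({t * (c : G)} : Set G)))
    have h3' : (Nat.card (Subgroup.centralizer ({x} : Set G)) : ℝ) *
        (Nat.card (Subgroup.centralizer ({t * (c : G)} : Set G)) : ℝ)
        ≤ (Nat.card G : ℝ) * (cstar : ℝ) := by exact_mod_cast h3
    exact inv_anti₀ (by positivity) h3'
  have hnonneg : ∀ g : G, 0 ≤ P x g * P g y := by
    intro g
    rw [hP, hP]
    split_ifs <;> positivity
  calc (z : ℝ) / ((Nat.card G : ℝ) * (cstar : ℝ))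
      = S.card * ((Nat.card G : ℝ) * (cstar : ℝ))⁻¹ := by
        rw [hcardS, div_eq_mul_inv]
    _ ≤ ∑ g ∈ S, P x g * P g y := by
        have := Finset.card_nsmul_le_sum S (fun g => P x g * P g y)
          (((Nat.card G : ℝ) * (cstar : ℝ))⁻¹) hbound
        simpa [nsmul_eq_mul] using this
    _ ≤ ∑ g : G, P x g * P g y :=
        Finset.sum_le_sum_of_subset_of_nonneg (Finset.subset_univ _)
          (fun g _ _ => hnonneg g)
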